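/- arXiv:1108.4383 — 4 statements merged into one kernel-verified Lean document; each statement's English description precedes it below -/
import Mathlib

section
/- The n×n permutation matrices span a linear subspace of dimension (n-1)² + 1 in the space of n×n complex matrices. -/
/-!
Every permutation matrix is semimagic (all row and column sums equal), and a semimagic matrix
indexed by `Fin (m + 1)` is determined by its common line sum together with the block obtained by
deleting row and column `0`. Conversely, each of these `m ^ 2 + 1` coordinates is realised inside
the span: the identity has coordinates `(1, 1)`, and the difference of two permutation matrices
differing by a transposition is the rank-one matrix `(e_{p+1} - e_0)(e_{q+1} - e_0)ᵀ`, whose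
coordinates are `(E_{pq}, 0)`. Hence the span is isomorphic to `Matrix (Fin m) (Fin m) R × R`.
-/

namespace Matrix

variable {n R : Type*} [Fintype n] [CommRing R]

variable (n R) in
def semimagic : Submodule R (Matrix n n R) where
  carrier := {A | ∃ c : R, A *ᵥ 1 = c • 1 ∧ 1 ᵥ* A = c • 1}
  add_mem' := by
    rintro A B ⟨a, hA, hA'⟩ ⟨b, hB, hB'⟩
    exact ⟨a + b, by rw [add_mulVec, hA, hB, add_smul], by rw [vecMul_add, hA', hB', add_smul]⟩
  zero_mem' := ⟨0, by simp, by simp⟩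
  smul_mem' := by
    rintro r A ⟨a, hA, hA'⟩
    exact ⟨r * a, by rw [smul_mulVec, hA, smul_smul], by rw [vecMul_smul, hA', smul_smul]⟩

variable [DecidableEq n]

theorem permMatrix_mem_semimagic (σ : Equiv.Perm n) : σ.permMatrix R ∈ semimagic n R :=
  ⟨1, by rw [permMatrix_mulVec, one_smul]; rfl, by rw [vecMul_permMatrix, one_smul]; rfl⟩

theorem span_permMatrix_le_semimagic :
    Submodule.span R (Set.range fun σ : Equiv.Perm n => σ.permMatrix R) ≤ semimagic n R :=
  Submodule.span_le.mpr <| Set.range_subset_iff.mpr permMatrix_mem_semimagic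

omit [Fintype n] in
theorem permMatrix_sub_permMatrix_mul_swap (σ : Equiv.Perm n) (a b : n) :
    σ.permMatrix R - (σ * Equiv.swap a b).permMatrix R =
      vecMulVec (Pi.single a 1 - Pi.single b 1) (Pi.single (σ a) 1 - Pi.single (σ b) 1) := by
  ext i j
  simp only [sub_apply, Equiv.Perm.permMatrix, PEquiv.toMatrix_toPEquiv_apply, Equiv.Perm.mul_apply,
    vecMulVec_apply, Pi.sub_apply]
  rcases eq_or_ne a b with rfl | hab
  · simp
  by_cases hia : i = a
  · simp [hia, hab]
  by_cases hib : i = b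
  · simp [hib, hab.symm]
  · simp [hia, hib, Equiv.swap_apply_of_ne_of_ne hia hib]


section FinSucc

variable {m : ℕ}

variable (R m) in
def semimagicCoords :
    Matrix (Fin (m + 1)) (Fin (m + 1)) R →ₗ[R] Matrix (Fin m) (Fin m) R × R where
  toFun A := (A.submatrix Fin.succ Fin.succ, (A *ᵥ 1) 0)
  map_add' A B := by simp [add_mulVec, submatrix_add]
  map_smul' r A := by simp [smul_mulVec, submatrix_smul]

theorem semimagicCoords_apply (A : Matrix (Fin (m + 1)) (Fin (m + 1)) R) :
    semimagicCoords R m A = (A.submatrix Fin.succ Fin.succ, (A *ᵥ 1) 0) := rfl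

theorem eq_zero_of_mem_semimagic_of_semimagicCoords_eq_zero
    {A : Matrix (Fin (m + 1)) (Fin (m + 1)) R} (hA : A ∈ semimagic (Fin (m + 1)) R)
    (h : semimagicCoords R m A = 0) : A = 0 := by
  obtain ⟨c, hrow, hcol⟩ := hA
  obtain ⟨hblock, hsum⟩ := Prod.ext_iff.mp h
  simp only [semimagicCoords_apply, Prod.fst_zero, Prod.snd_zero] at hblock hsum
  have hc : c = 0 := by simpa [hrow] using hsum
  have hblock' : ∀ p q : Fin m, A p.succ q.succ = 0 := fun p q => congrFun (congrFun hblock p) q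
  have hrow' : ∀ i, A i 0 + ∑ q : Fin m, A i q.succ = 0 := fun i => by
    simpa [hc, mulVec, dotProduct, Fin.sum_univ_succ] using congrFun hrow i
  have hcol' : ∀ j, A 0 j + ∑ p : Fin m, A p.succ j = 0 := fun j => by
    simpa [hc, vecMul, dotProduct, Fin.sum_univ_succ] using congrFun hcol j
  have hfirstCol : ∀ p : Fin m, A p.succ 0 = 0 := fun p => by simpa [hblock'] using hrow' p.succ
  have hfirstRow : ∀ q : Fin m, A 0 q.succ = 0 := fun q => by simpa [hblock'] using hcol' q.succ
  ext i j
  induction i using Fin.cases <;> induction j using Fin.cases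
  · simpa [hfirstRow] using hrow' 0
  · exact hfirstRow _
  · exact hfirstCol _
  · exact hblock' _ _

theorem semimagicCoords_one : semimagicCoords R m 1 = (1, 1) := by
  simp [semimagicCoords_apply, submatrix_one _ (Fin.succ_injective m)]

theorem semimagicCoords_vecMulVec_single_succ_sub_single_zero (p q : Fin m) :
    semimagicCoords R m
        (vecMulVec (Pi.single p.succ 1 - Pi.single 0 1) (Pi.single q.succ 1 - Pi.single 0 1)) =
      (single p q 1, 0) := by
  ext i j
  · simp [semimagicCoords_apply, single_eq_single_vecMulVec_single, vecMulVec_apply,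
      Pi.single_apply]
  · simp [semimagicCoords_apply, vecMulVec_mulVec]

theorem vecMulVec_single_succ_sub_single_zero_mem_span (p q : Fin m) :
    vecMulVec (Pi.single p.succ 1 - Pi.single 0 1) (Pi.single q.succ 1 - Pi.single 0 1) ∈
      Submodule.span R (Set.range fun σ : Equiv.Perm (Fin (m + 1)) => σ.permMatrix R) := by
  have hσ : Equiv.swap p.succ q.succ 0 = 0 :=
    Equiv.swap_apply_of_ne_of_ne (Fin.succ_ne_zero p).symm (Fin.succ_ne_zero q).symm
  have h := permMatrix_sub_permMatrix_mul_swap (R := R) (Equiv.swap p.succ q.succ) p.succ 0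
  rw [Equiv.swap_apply_left, hσ] at h
  rw [← h]
  exact Submodule.sub_mem _ (Submodule.subset_span ⟨_, rfl⟩) (Submodule.subset_span ⟨_, rfl⟩)

theorem map_span_permMatrix_semimagicCoords :
    (Submodule.span R (Set.range fun σ : Equiv.Perm (Fin (m + 1)) => σ.permMatrix R)).map
      (semimagicCoords R m) = ⊤ := by
  set S := Submodule.span R (Set.range fun σ : Equiv.Perm (Fin (m + 1)) => σ.permMatrix R)
  have hblock (B : Matrix (Fin m) (Fin m) R) : (B, 0) ∈ S.map (semimagicCoords R m) := by
    have hB : (B, (0 : R)) = ∑ p, ∑ q, B p q • (single p q (1 : R), (0 : R)) := by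
      conv_lhs => rw [matrix_eq_sum_single B]
      ext <;> simp [Prod.fst_sum, Prod.snd_sum]
    rw [hB]
    exact Submodule.sum_mem _ fun p _ => Submodule.sum_mem _ fun q _ => Submodule.smul_mem _ _
      ⟨_, vecMulVec_single_succ_sub_single_zero_mem_span p q,
        semimagicCoords_vecMulVec_single_succ_sub_single_zero p q⟩
  have hone : (1, 1) ∈ S.map (semimagicCoords R m) :=
    ⟨1, permMatrix_one (n := Fin (m + 1)) (R := R) ▸ Submodule.subset_span ⟨1, rfl⟩,
      semimagicCoords_one⟩
  refine eq_top_iff.mpr fun ⟨B, c⟩ _ => ?_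
  have hBc : (B, c) = c • (1, 1) + (B - c • 1, 0) := by ext <;> simp
  rw [hBc]
  exact add_mem (Submodule.smul_mem _ c hone) (hblock _)

variable (R m) in
noncomputable def spanPermMatrixEquiv :
    Submodule.span R (Set.range fun σ : Equiv.Perm (Fin (m + 1)) => σ.permMatrix R) ≃ₗ[R]
      Matrix (Fin m) (Fin m) R × R :=
  LinearEquiv.ofBijective ((semimagicCoords R m).comp (Submodule.subtype _))
    ⟨(injective_iff_map_eq_zero _).mpr fun A hA =>
      Subtype.ext (eq_zero_of_mem_semimagic_of_semimagicCoords_eq_zero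
        (span_permMatrix_le_semimagic A.2) hA),
    LinearMap.range_eq_top.mp <| by
      rw [LinearMap.range_comp, Submodule.range_subtype, map_span_permMatrix_semimagicCoords]⟩

variable (R m) in
theorem finrank_span_permMatrix [StrongRankCondition R] :
    Module.finrank R
        (Submodule.span R (Set.range fun σ : Equiv.Perm (Fin (m + 1)) => σ.permMatrix R)) =
      m ^ 2 + 1 := by
  rw [(spanPermMatrixEquiv R m).finrank_eq, Module.finrank_prod, Module.finrank_matrix,
    Module.finrank_self]
  simp [sq]

end FinSucc

end Matrix

/-- The `n × n` permutation matrices span a linear subspace of dimension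
`(n-1)² + 1` in the space of `n × n` complex matrices. -/
theorem span_perm_matrices_finrank (n : ℕ) (hn : 1 ≤ n) :
    Module.finrank ℂ
        ↥(Submodule.span ℂ (Set.range fun σ : Equiv.Perm (Fin n) => σ.permMatrix ℂ))
      = (n - 1) ^ 2 + 1 := by
  obtain ⟨m, rfl⟩ := Nat.exists_eq_add_of_le' hn
  rw [Matrix.finrank_span_permMatrix ℂ m, Nat.add_sub_cancel]
end

section
/- If λ and π are distinct partitions of n, λ̄ is a Young tableau of shape λ and π̄ is a Young tableau of shape π, then the product of Young symmetrizers c_{λ̄} · c_{π̄} = 0 in the group algebra C[S_n]. -/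
open scoped BigOperators

attribute [local instance] Classical.propDecidable

/-- The row stabilizer of a Young tableau `T` (a bijective filling of the cells of the Young
diagram `Y` by `1, …, n`): permutations of the entries preserving each row. -/
noncomputable def rowStab {n : ℕ} (Y : YoungDiagram) (T : {c // c ∈ Y.cells} ≃ Fin n) :
    Finset (Equiv.Perm (Fin n)) :=
  Finset.univ.filter fun σ =>
    ∀ x : Fin n, ((T.symm (σ x)) : ℕ × ℕ).1 = ((T.symm x) : ℕ × ℕ).1

/-- The column stabilizer of a Young tableau `T`: permutations of the entries preserving each
column. -/
noncomputable def colStab {n : ℕ} (Y : YoungDiagram) (T : {c // c ∈ Y.cells} ≃ Fin n) :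
    Finset (Equiv.Perm (Fin n)) :=
  Finset.univ.filter fun σ =>
    ∀ x : Fin n, ((T.symm (σ x)) : ℕ × ℕ).2 = ((T.symm x) : ℕ × ℕ).2

/-- The Young symmetrizer `c_T = ∑_{p ∈ P_T, q ∈ Q_T} sgn(q) p q` in `ℂ[S_n]`. -/
noncomputable def youngSymmetrizer {n : ℕ} (Y : YoungDiagram)
    (T : {c // c ∈ Y.cells} ≃ Fin n) : MonoidAlgebra ℂ (Equiv.Perm (Fin n)) :=
  ∑ p ∈ rowStab Y T, ∑ q ∈ colStab Y T,
    MonoidAlgebra.single (p * q) ((Equiv.Perm.sign q : ℤ) : ℂ)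

/-!
Write `c_T = a_T b_T` with `a_T = ∑_{p ∈ P_T} p` and `b_T = ∑_{q ∈ Q_T} sgn(q) q`. As `λ ≠ π`,
for some `k` the first `k` rows of one diagram hold more cells than the first `k` rows of the
other. Counting column by column, a tableau of the larger shape must then have two entries in one
row that lie in one column of any tableau of the smaller shape. If `π` is larger, the
transposition `t` of two such entries satisfies `b_λ t = -b_λ` and `t a_π = a_π`, so
`b_λ a_π = 0`. If `λ` is larger, the same argument for `λ̄` and `g π̄` gives `a_λ g b_π = 0` for
every `g ∈ S_n`, hence `a_λ x b_π = 0` for all `x`. Either way `c_λ c_π = a_λ (b_λ a_π) b_π = 0`.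
-/

open Equiv MonoidAlgebra Finset

section TwistedSum

variable {k G : Type*} [Semiring k] [Group G]

noncomputable def twistedSum (S : Finset G) (χ : G →* k) : MonoidAlgebra k G :=
  ∑ g ∈ S, single g (χ g)

lemma twistedSum_mul_single {S : Finset G} (χ : G →* k) {t : G}
    (hS : ∀ g, g * t ∈ S ↔ g ∈ S) :
    twistedSum S χ * single t (χ t) = twistedSum S χ := by
  simp only [twistedSum, sum_mul, single_mul_single, ← map_mul]
  exact sum_equiv (Equiv.mulRight t) (fun g => (hS g).symm) fun _ _ => rfl

lemma single_mul_twistedSum {S : Finset G} (χ : G →* k) {t : G}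
    (hS : ∀ g, t * g ∈ S ↔ g ∈ S) :
    single t (χ t) * twistedSum S χ = twistedSum S χ := by
  simp only [twistedSum, mul_sum, single_mul_single, ← map_mul]
  exact sum_equiv (Equiv.mulLeft t) (fun g => (hS g).symm) fun _ _ => rfl

end TwistedSum

lemma mul_mul_eq_zero_of_forall_single {k G : Type*} [CommSemiring k] [Monoid G]
    {a b : MonoidAlgebra k G} (h : ∀ g, a * single g 1 * b = 0) (x : MonoidAlgebra k G) :
    a * x * b = 0 := by
  induction x using MonoidAlgebra.induction_linear with
  | zero => rw [mul_zero, zero_mul]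
  | add x y hx hy => rw [mul_add, add_mul, hx, hy, add_zero]
  | single g c => rw [← mul_one c, ← smul_single', mul_smul_comm, smul_mul_assoc, h, smul_zero]

instance {k G : Type*} [DivisionRing k] [CharZero k] : IsAddTorsionFree (MonoidAlgebra k G) :=
  .of_module_rat _

section FiberStabilizer

variable {α β : Type*}

def fiberStabilizer (f : α → β) : Subgroup (Perm α) where
  carrier := {σ | ∀ x, f (σ x) = f x}
  mul_mem' hσ hτ x := (hσ _).trans (hτ x)
  one_mem' _ := rfl
  inv_mem' {σ} hσ x := by simpa using (hσ (σ⁻¹ x)).symm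

@[simp]
lemma mem_fiberStabilizer {f : α → β} {σ : Perm α} :
    σ ∈ fiberStabilizer f ↔ ∀ x, f (σ x) = f x :=
  Iff.rfl

lemma swap_mem_fiberStabilizer [DecidableEq α] {f : α → β} {x y : α} (h : f x = f y) :
    swap x y ∈ fiberStabilizer f := by
  intro z
  rcases eq_or_ne z x with rfl | hzx
  · simpa using h.symm
  rcases eq_or_ne z y with rfl | hzy
  · simpa using h
  · rw [swap_apply_of_ne_of_ne hzx hzy]

end FiberStabilizer

namespace YoungDiagram

def topCells (μ : YoungDiagram) (k : ℕ) : Finset (ℕ × ℕ) :=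
  μ.cells.filter fun c => c.1 < k

lemma mem_topCells {μ : YoungDiagram} {k : ℕ} {c : ℕ × ℕ} :
    c ∈ μ.topCells k ↔ c ∈ μ ∧ c.1 < k := by
  simp [topCells]

lemma card_topCells_succ (μ : YoungDiagram) (k : ℕ) :
    #(μ.topCells (k + 1)) = #(μ.topCells k) + μ.rowLen k := by
  have hunion : μ.topCells (k + 1) = μ.topCells k ∪ μ.row k := by
    ext c
    simp only [mem_union, mem_topCells, mem_row_iff]
    grind
  have hdisj : Disjoint (μ.topCells k) (μ.row k) := by
    rw [disjoint_left]
    intro c hc hc'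
    rw [mem_topCells] at hc
    rw [mem_row_iff] at hc'
    omega
  rw [hunion, card_union_of_disjoint hdisj, rowLen_eq_card]

lemma eq_of_forall_card_topCells_eq {μ ν : YoungDiagram}
    (h : ∀ k, #(μ.topCells k) = #(ν.topCells k)) : μ = ν := by
  have hrow (i : ℕ) : μ.rowLen i = ν.rowLen i := by
    have := h (i + 1)
    rw [card_topCells_succ, card_topCells_succ, h i] at this
    omega
  ext ⟨i, j⟩
  rw [mem_cells, mem_cells, mem_iff_lt_rowLen, mem_iff_lt_rowLen, hrow]

lemma card_topCells_filter_snd_eq (μ : YoungDiagram) (k j : ℕ) :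
    #{c ∈ μ.topCells k | c.2 = j} = min k (μ.colLen j) := by
  have : {c ∈ μ.topCells k | c.2 = j} = range (min k (μ.colLen j)) ×ˢ {j} := by
    ext ⟨i, j'⟩
    simp only [mem_filter, mem_topCells, mem_iff_lt_colLen, mem_product, mem_range,
      mem_singleton, lt_min_iff]
    grind
  rw [this, card_product, card_range, card_singleton, mul_one]

lemma card_topCells_le_of_injective {μ ν : YoungDiagram} (e : μ.cells → ν.cells)
    (he : Function.Injective e) (hrow : ∀ c d, c.1.1 = d.1.1 → (e c).1.2 = (e d).1.2 → c = d)
    (k : ℕ) : #(μ.topCells k) ≤ #(ν.topCells k) := by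
  set A := (μ.topCells k).subtype (· ∈ μ.cells)
  have hA : #A = #(μ.topCells k) := by
    rw [card_subtype]
    congr 1
    exact filter_true_of_mem fun c hc => (mem_topCells.mp hc).1
  -- The cells of `A` that `e` sends to column `j` lie in distinct rows `< k`.
  have hcol (j : ℕ) : #{c ∈ A | (e c).1.2 = j} ≤ #{c ∈ ν.topCells k | c.2 = j} := by
    rw [card_topCells_filter_snd_eq]
    refine le_min ?_ ?_
    · calc #{c ∈ A | (e c).1.2 = j} ≤ #(range k) := by
            refine card_le_card_of_injOn (fun c => c.1.1) (fun c hc => ?_) fun c hc d hd h => ?_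
            · simp only [mem_coe, mem_filter, A, mem_subtype, mem_topCells] at hc
              simpa using hc.1.2
            · simp only [mem_coe, mem_filter] at hc hd
              exact hrow c d h (hc.2.trans hd.2.symm)
        _ = k := card_range k
    · calc #{c ∈ A | (e c).1.2 = j} ≤ #(ν.col j) := by
            refine card_le_card_of_injOn (fun c => (e c).1) (fun c hc => ?_) fun c _ d _ h => ?_
            · simp only [mem_coe, mem_filter] at hc
              simpa [mem_col_iff] using hc.2
            · exact he (Subtype.ext h)
        _ = ν.colLen j := (colLen_eq_card ν).symm
  have hA_maps : Set.MapsTo (fun c => (e c).1.2) A (ν.cells.image Prod.snd) :=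
    fun c _ => mem_image_of_mem _ (e c).2
  have hν_maps : Set.MapsTo Prod.snd (ν.topCells k : Set (ℕ × ℕ)) (ν.cells.image Prod.snd) :=
    fun c hc => mem_image_of_mem Prod.snd (mem_topCells.mp hc).1
  calc #(μ.topCells k) = #A := hA.symm
    _ = ∑ j ∈ ν.cells.image Prod.snd, #{c ∈ A | (e c).1.2 = j} :=
        card_eq_sum_card_fiberwise hA_maps
    _ ≤ ∑ j ∈ ν.cells.image Prod.snd, #{c ∈ ν.topCells k | c.2 = j} :=
        sum_le_sum fun j _ => hcol j
    _ = #(ν.topCells k) := (card_eq_sum_card_fiberwise hν_maps).symm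

lemma exists_ne_of_card_topCells_lt {μ ν : YoungDiagram} {k : ℕ}
    (hk : #(ν.topCells k) < #(μ.topCells k)) (e : μ.cells ≃ ν.cells) :
    ∃ c d, c ≠ d ∧ c.1.1 = d.1.1 ∧ (e c).1.2 = (e d).1.2 := by
  by_contra! h
  exact hk.not_ge <| card_topCells_le_of_injective e e.injective
    (fun c d hrow hcol => by_contra fun hcd => h c d hcd hrow hcol) k

end YoungDiagram

section Symmetrizers

variable {n : ℕ} {Y : YoungDiagram} {T : {c // c ∈ Y.cells} ≃ Fin n}

lemma mem_rowStab {σ : Perm (Fin n)} :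
    σ ∈ rowStab Y T ↔ σ ∈ fiberStabilizer fun x => (T.symm x : ℕ × ℕ).1 := by
  simp [rowStab]

lemma mem_colStab {σ : Perm (Fin n)} :
    σ ∈ colStab Y T ↔ σ ∈ fiberStabilizer fun x => (T.symm x : ℕ × ℕ).2 := by
  simp [colStab]

noncomputable def signChar : Perm (Fin n) →* ℂ :=
  (Int.castRingHom ℂ).toMonoidHom.comp ((Units.coeHom ℤ).comp Perm.sign)

noncomputable def rowSymmetrizer (Y : YoungDiagram) (T : {c // c ∈ Y.cells} ≃ Fin n) :
    MonoidAlgebra ℂ (Perm (Fin n)) :=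
  twistedSum (rowStab Y T) 1

noncomputable def colAntisymmetrizer (Y : YoungDiagram) (T : {c // c ∈ Y.cells} ≃ Fin n) :
    MonoidAlgebra ℂ (Perm (Fin n)) :=
  twistedSum (colStab Y T) signChar

lemma youngSymmetrizer_eq_mul :
    youngSymmetrizer Y T = rowSymmetrizer Y T * colAntisymmetrizer Y T := by
  simp only [youngSymmetrizer, rowSymmetrizer, colAntisymmetrizer, twistedSum, sum_mul_sum,
    single_mul_single, MonoidHom.one_apply, one_mul]
  rfl

lemma rowSymmetrizer_mul_single {t : Perm (Fin n)} (ht : t ∈ rowStab Y T) :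
    rowSymmetrizer Y T * single t 1 = rowSymmetrizer Y T := by
  rw [mem_rowStab] at ht
  simpa [rowSymmetrizer] using twistedSum_mul_single (1 : Perm (Fin n) →* ℂ) (S := rowStab Y T)
    fun g => by simpa only [mem_rowStab] using Subgroup.mul_mem_cancel_right _ ht

lemma single_mul_rowSymmetrizer {t : Perm (Fin n)} (ht : t ∈ rowStab Y T) :
    single t 1 * rowSymmetrizer Y T = rowSymmetrizer Y T := by
  rw [mem_rowStab] at ht
  simpa [rowSymmetrizer] using single_mul_twistedSum (1 : Perm (Fin n) →* ℂ) (S := rowStab Y T)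
    fun g => by simpa only [mem_rowStab] using Subgroup.mul_mem_cancel_left _ ht

lemma colAntisymmetrizer_mul_single {t : Perm (Fin n)} (ht : t ∈ colStab Y T)
    (hsign : Perm.sign t = -1) :
    colAntisymmetrizer Y T * single t 1 = -colAntisymmetrizer Y T := by
  rw [mem_colStab] at ht
  have := twistedSum_mul_single (k := ℂ) signChar (S := colStab Y T) fun g => by
    simpa only [mem_colStab] using Subgroup.mul_mem_cancel_right _ ht
  have hχ : signChar t = -1 := by simp [signChar, hsign]
  rwa [hχ, single_neg, mul_neg, neg_eq_iff_eq_neg] at this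

lemma single_mul_colAntisymmetrizer {t : Perm (Fin n)} (ht : t ∈ colStab Y T)
    (hsign : Perm.sign t = -1) :
    single t 1 * colAntisymmetrizer Y T = -colAntisymmetrizer Y T := by
  rw [mem_colStab] at ht
  have := single_mul_twistedSum (k := ℂ) signChar (S := colStab Y T) fun g => by
    simpa only [mem_colStab] using Subgroup.mul_mem_cancel_left _ ht
  have hχ : signChar t = -1 := by simp [signChar, hsign]
  rwa [hχ, single_neg, neg_mul, neg_eq_iff_eq_neg] at this

end Symmetrizers
section Vanishing

variable {n : ℕ} {Y Z : YoungDiagram} {TY : {c // c ∈ Y.cells} ≃ Fin n}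
  {TZ : {c // c ∈ Z.cells} ≃ Fin n} {k : ℕ}

lemma rowSymmetrizer_mul_single_mul_colAntisymmetrizer_eq_zero
    (hk : #(Z.topCells k) < #(Y.topCells k)) (g : Perm (Fin n)) :
    rowSymmetrizer Y TY * single g 1 * colAntisymmetrizer Z TZ = 0 := by
  obtain ⟨c, d, hcd, hrow, hcol⟩ :=
    YoungDiagram.exists_ne_of_card_topCells_lt hk ((TY.trans g⁻¹).trans TZ.symm)
  have hxy : TY c ≠ TY d := TY.injective.ne hcd
  have ht : swap (TY c) (TY d) ∈ rowStab Y TY :=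
    mem_rowStab.mpr (swap_mem_fiberStabilizer (by simpa using hrow))
  have hs : swap (g⁻¹ (TY c)) (g⁻¹ (TY d)) ∈ colStab Z TZ :=
    mem_colStab.mpr (swap_mem_fiberStabilizer hcol)
  have hsign : Perm.sign (swap (g⁻¹ (TY c)) (g⁻¹ (TY d))) = -1 :=
    Perm.sign_swap ((g⁻¹).injective.ne hxy)
  have hconj : single (swap (TY c) (TY d)) (1 : ℂ) * single g 1 =
      single g 1 * single (swap (g⁻¹ (TY c)) (g⁻¹ (TY d))) 1 := by
    rw [single_mul_single, single_mul_single, swap_apply_apply]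
    group
  apply self_eq_neg.mp
  calc rowSymmetrizer Y TY * single g 1 * colAntisymmetrizer Z TZ
      = rowSymmetrizer Y TY * single (swap (TY c) (TY d)) 1 * single g 1 *
          colAntisymmetrizer Z TZ := by
        rw [rowSymmetrizer_mul_single ht]
    _ = rowSymmetrizer Y TY * single g 1 * single (swap (g⁻¹ (TY c)) (g⁻¹ (TY d))) 1 *
          colAntisymmetrizer Z TZ := by
        rw [mul_assoc (rowSymmetrizer Y TY), hconj, ← mul_assoc]
    _ = -(rowSymmetrizer Y TY * single g 1 * colAntisymmetrizer Z TZ) := by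
        rw [mul_assoc _ (single _ 1), single_mul_colAntisymmetrizer hs hsign, mul_neg]

lemma colAntisymmetrizer_mul_rowSymmetrizer_eq_zero (hk : #(Y.topCells k) < #(Z.topCells k)) :
    colAntisymmetrizer Y TY * rowSymmetrizer Z TZ = 0 := by
  obtain ⟨c, d, hcd, hrow, hcol⟩ :=
    YoungDiagram.exists_ne_of_card_topCells_lt hk (TZ.trans TY.symm)
  have ht : swap (TZ c) (TZ d) ∈ rowStab Z TZ :=
    mem_rowStab.mpr (swap_mem_fiberStabilizer (by simpa using hrow))
  have hs : swap (TZ c) (TZ d) ∈ colStab Y TY :=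
    mem_colStab.mpr (swap_mem_fiberStabilizer hcol)
  have hsign : Perm.sign (swap (TZ c) (TZ d)) = -1 := Perm.sign_swap (TZ.injective.ne hcd)
  apply self_eq_neg.mp
  calc colAntisymmetrizer Y TY * rowSymmetrizer Z TZ
      = colAntisymmetrizer Y TY * (single (swap (TZ c) (TZ d)) 1 * rowSymmetrizer Z TZ) := by
        rw [single_mul_rowSymmetrizer ht]
    _ = -(colAntisymmetrizer Y TY * rowSymmetrizer Z TZ) := by
        rw [← mul_assoc, colAntisymmetrizer_mul_single hs hsign, neg_mul]

end Vanishing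

theorem youngSymmetrizer_mul_eq_zero_general (n : ℕ) (Y Z : YoungDiagram)
    (hne : Y ≠ Z)
    (TY : {c // c ∈ Y.cells} ≃ Fin n) (TZ : {c // c ∈ Z.cells} ≃ Fin n) :
    youngSymmetrizer Y TY * youngSymmetrizer Z TZ = 0 := by
  obtain ⟨k, hk⟩ : ∃ k, #(Y.topCells k) ≠ #(Z.topCells k) := by
    contrapose! hne
    exact YoungDiagram.eq_of_forall_card_topCells_eq hne
  rw [youngSymmetrizer_eq_mul, youngSymmetrizer_eq_mul, mul_assoc,
    ← mul_assoc _ (rowSymmetrizer Z TZ)]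
  rcases hk.lt_or_gt with h | h
  · rw [colAntisymmetrizer_mul_rowSymmetrizer_eq_zero h, zero_mul, mul_zero]
  · rw [← mul_assoc]
    exact mul_mul_eq_zero_of_forall_single
      (rowSymmetrizer_mul_single_mul_colAntisymmetrizer_eq_zero h) _

/-- If `λ` and `π` are distinct partitions of `n` (Young diagrams `Y ≠ Z` with `n`
cells) with tableaux `λ̄ = TY`, `π̄ = TZ`, then `c_{λ̄} · c_{π̄} = 0` in `ℂ[S_n]`. -/
theorem youngSymmetrizer_mul_eq_zero (n : ℕ) (Y Z : YoungDiagram)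
    (hY : Y.cells.card = n) (hZ : Z.cells.card = n) (hne : Y ≠ Z)
    (TY : {c // c ∈ Y.cells} ≃ Fin n) (TZ : {c // c ∈ Z.cells} ≃ Fin n) :
    youngSymmetrizer Y TY * youngSymmetrizer Z TZ = 0 :=
  youngSymmetrizer_mul_eq_zero_general n Y Z hne TY TZ
end

section
/- Consider complex numbers a_{ij} indexed by distinct i,j ∈ {2,3,4,5} satisfying: (i) a_{ij}+a_{jk}+a_{km} = a_{ik}+a_{kj}+a_{jm} whenever {i,j,k,m} = {2,3,4,5}, and (ii) a_{ij}+a_{jk} = a_{ij'}+a_{j'k} whenever {i,j,k,j'} = {2,3,4,5}. Then there exists λ ∈ C such that for every permutation μ of {2,3,4,5} moving exactly ℓ elements, Σ_{i: μ(i)≠i} a_{iμ(i)} = ℓλ. -/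
/-!
Conditions (i) and (ii) force `a i j + a j i` to be the same constant `2λ` for every pair and the
antisymmetric part `a i j - a j i` to be a cocycle, so that `a i j = λ + f i - f j` for
`f i = (a i 0 - a 0 i) / 2`. Summed over the moved points of `μ`, which `μ` permutes, the
potential `f` telescopes and only `ℓ λ` remains.
-/

attribute [local instance] Classical.propDecidable

open Finset

theorem sum_moved_eq_card_smul {α M : Type*} [Fintype α] [AddCommGroup M]
    (a : α → α → M) (c : M) (f : α → M) (ha : ∀ i j, i ≠ j → a i j = c + f i - f j)
    (μ : Equiv.Perm α) [DecidablePred fun i => μ i ≠ i] :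
    ∑ i ∈ univ.filter (fun i => μ i ≠ i), a i (μ i)
      = (univ.filter (fun i => μ i ≠ i)).card • c := by
  set s := univ.filter (fun i => μ i ≠ i)
  have hf : ∑ i ∈ s, f (μ i) = ∑ i ∈ s, f i :=
    μ.sum_comp s f fun i hi => mem_filter.2 ⟨mem_univ i, hi⟩
  calc ∑ i ∈ s, a i (μ i) = ∑ i ∈ s, (c + f i - f (μ i)) :=
        sum_congr rfl fun i hi => ha i (μ i) (mem_filter.1 hi).2.symm
    _ = s.card • c := by rw [sum_sub_distrib, sum_add_distrib, hf, sum_const]; abel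

theorem add_swap_eq_add_swap {α M : Type*} [AddCommMonoid M] (a : α → α → M)
    (h : ∀ i j k, i ≠ j → j ≠ k → i ≠ k → a i j + a j i = a i k + a k i)
    {i j k l : α} (hij : i ≠ j) (hkl : k ≠ l) : a i j + a j i = a k l + a l k := by
  have h' : ∀ i j k, i ≠ j → i ≠ k → a i j + a j i = a i k + a k i := fun i j k hij hik => by
    rcases eq_or_ne j k with rfl | hjk
    · rfl
    · exact h i j k hij hjk hik
  rcases eq_or_ne k i with rfl | hki
  · exact h' k j l hij hkl
  rcases eq_or_ne k j with rfl | hkj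
  · rw [add_comm]
    exact h' k i l hij.symm hkl
  calc a i j + a j i = a k i + a i k := by
        rw [add_comm (a k i)]
        exact h i j k hij hkj.symm hki.symm
    _ = a k l + a l k := h' k i l hki hkl

theorem eq_const_add_sub_of_cocycle {α K : Type*} [Field K] [CharZero K] (a : α → α → K)
    (o : α) (c : K) (hs : ∀ i j, i ≠ j → a i j + a j i = 2 * c)
    (hb : ∀ i j k, i ≠ j → j ≠ k → i ≠ k → a i j + a j k + a k i = a j i + a k j + a i k)
    (i j : α) (hij : i ≠ j) :
    a i j = c + (a i o - a o i) / 2 - (a j o - a o j) / 2 := by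
  by_cases hi : i = o
  · subst hi
    linear_combination hs i j hij / 2
  by_cases hj : j = o
  · subst hj
    linear_combination hs i j hij / 2
  · linear_combination hs i j hij / 2 + hb i j o hij hj hi / 2

theorem Fin.four_insert_eq_univ_of_nodup {i j k l : Fin 4} (h : [i, j, k, l].Nodup) :
    ({i, j, k, l} : Finset (Fin 4)) = univ := by
  revert i j k l
  decide

theorem Fin.four_exists_ne (i j k : Fin 4) : ∃ l, l ≠ i ∧ l ≠ j ∧ l ≠ k := by
  revert i j k
  decide

theorem add_swap_eq_add_swap_of_fin_four {K : Type*} [CommRing K] (a : Fin 4 → Fin 4 → K)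
    (h1 : ∀ i j k m : Fin 4, ({i, j, k, m} : Finset (Fin 4)) = univ →
      a i j + a j k + a k m = a i k + a k j + a j m)
    (h2 : ∀ i j k j' : Fin 4, ({i, j, k, j'} : Finset (Fin 4)) = univ →
      a i j + a j k = a i j' + a j' k)
    (i j k : Fin 4) (hij : i ≠ j) (hjk : j ≠ k) (hik : i ≠ k) :
    a i j + a j i = a i k + a k i := by
  obtain ⟨l, hli, hlj, hlk⟩ := Fin.four_exists_ne i j k
  linear_combination h1 i j k l (Fin.four_insert_eq_univ_of_nodup (by simp [*, Ne.symm]))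
    + h2 j i l k (Fin.four_insert_eq_univ_of_nodup (by simp [*, Ne.symm]))
    - h2 k i l j (Fin.four_insert_eq_univ_of_nodup (by simp [*, Ne.symm]))

theorem cocycle_of_fin_four {K : Type*} [Field K] [CharZero K] (a : Fin 4 → Fin 4 → K)
    (h1 : ∀ i j k m : Fin 4, ({i, j, k, m} : Finset (Fin 4)) = univ →
      a i j + a j k + a k m = a i k + a k j + a j m)
    (i j k : Fin 4) (hij : i ≠ j) (hjk : j ≠ k) (hik : i ≠ k) :
    a i j + a j k + a k i = a j i + a k j + a i k := by
  obtain ⟨l, hli, hlj, hlk⟩ := Fin.four_exists_ne i j k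
  linear_combination (h1 i j k l (Fin.four_insert_eq_univ_of_nodup (by simp [*, Ne.symm]))
    - h1 j i k l (Fin.four_insert_eq_univ_of_nodup (by simp [*, Ne.symm]))
    + h1 k i j l (Fin.four_insert_eq_univ_of_nodup (by simp [*, Ne.symm]))) / 2

/-- For complex numbers `a i j` indexed by the four-element set `{2,3,4,5}`
(modelled as `Fin 4`) satisfying
(i) `a i j + a j k + a k m = a i k + a k j + a j m` whenever `{i,j,k,m} = {2,3,4,5}`, and
(ii) `a i j + a j k = a i j' + a j' k` whenever `{i,j,k,j'} = {2,3,4,5}`,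
there exists `λ ∈ ℂ` such that for every permutation `μ` of `{2,3,4,5}` moving exactly `ℓ`
elements, `∑_{i : μ i ≠ i} a i (μ i) = ℓ λ`. -/
theorem moved_sum_linear (a : Fin 4 → Fin 4 → ℂ)
    (h1 : ∀ i j k m : Fin 4, ({i, j, k, m} : Finset (Fin 4)) = Finset.univ →
      a i j + a j k + a k m = a i k + a k j + a j m)
    (h2 : ∀ i j k j' : Fin 4, ({i, j, k, j'} : Finset (Fin 4)) = Finset.univ →
      a i j + a j k = a i j' + a j' k) :
    ∃ lam : ℂ, ∀ μ : Equiv.Perm (Fin 4),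
      ∑ i ∈ Finset.univ.filter (fun i => μ i ≠ i), a i (μ i)
        = ((Finset.univ.filter (fun i => μ i ≠ i)).card : ℂ) * lam := by
  refine ⟨(a 0 1 + a 1 0) / 2, fun μ => ?_⟩
  have hs : ∀ i j, i ≠ j → a i j + a j i = 2 * ((a 0 1 + a 1 0) / 2) := fun i j hij => by
    rw [mul_div_cancel₀ _ two_ne_zero]
    exact add_swap_eq_add_swap a (add_swap_eq_add_swap_of_fin_four a h1 h2) hij (by decide)
  have ha := eq_const_add_sub_of_cocycle a 0 _ hs (cocycle_of_fin_four a h1)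
  rw [sum_moved_eq_card_smul a _ _ ha μ, nsmul_eq_mul]
end

section
/- Let π ⊢ n and suppose (τ₁, τ₂, (c_σ)_{σ∈S_n}) acts on the monomial Π_i x_{iσ(i)} by sending it to c_σ Π_i x_{τ₁(i) τ₂σ(i)}. If this action fixes the immanant P_π, then c_{τ₂^{-1}τ₁σ} χ_π(τ₂^{-1}τ₁σ) = χ_π(σ) for all σ ∈ S_n. -/
/-!
The monomials `∏ i, x_{i ρ(i)}` for distinct permutations `ρ` are distinct, so a polynomial
`∑ ρ, a_ρ ∏ i, x_{i ρ(i)}` determines its coefficients `a_ρ`. Substituting `ρ = τ₂ σ τ₁⁻¹`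
writes the image of `P_π` in this form with `a_ρ = χ(τ₂⁻¹ ρ τ₁) c(τ₂⁻¹ ρ τ₁)`; comparing with
`a_ρ = χ(ρ)` at `ρ = τ₁ σ τ₁⁻¹` and using that `χ` is a class function gives the claim.
-/

open MvPolynomial

section Graph

variable {ι κ R : Type*} [Fintype ι] [CommSemiring R]

lemma prod_X_graph_eq_monomial (f : ι → κ) :
    ∏ i, X (R := R) (i, f i) = monomial (∑ i, Finsupp.single (i, f i) 1) 1 := by
  rw [monomial_sum_one]
  rfl

variable [DecidableEq κ]

lemma sum_single_graph_apply (f : ι → κ) (i : ι) (j : κ) :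
    (∑ k, Finsupp.single (k, f k) 1 : ι × κ →₀ ℕ) (i, j) = if f i = j then 1 else 0 := by
  classical
  rw [Finsupp.finsetSum_apply, Finset.sum_eq_single i] <;>
    simp +contextual [Finsupp.single_apply, Prod.ext_iff, eq_comm]

lemma sum_single_graph_injective :
    Function.Injective fun f : ι → κ => (∑ k, Finsupp.single (k, f k) 1 : ι × κ →₀ ℕ) := by
  intro f g hfg
  funext i
  have hi := DFunLike.congr_fun hfg (i, g i)
  simp only [sum_single_graph_apply] at hi
  exact of_not_not fun hne => by simp [hne] at hi

lemma coeff_prod_X_graph (f g : ι → κ) :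
    coeff (∑ i, Finsupp.single (i, g i) 1) (∏ i, X (R := R) (i, f i)) =
      if f = g then 1 else 0 := by
  classical
  rw [prod_X_graph_eq_monomial, coeff_monomial]
  exact if_congr sum_single_graph_injective.eq_iff rfl rfl

end Graph

section Perm

variable {α R : Type*} [Fintype α] [DecidableEq α] [CommSemiring R]

lemma coeff_sum_C_mul_prod_X_perm (a : Equiv.Perm α → R) (σ : Equiv.Perm α) :
    coeff (∑ i, Finsupp.single (i, σ i) 1)
        (∑ ρ : Equiv.Perm α, C (a ρ) * ∏ i, X (i, ρ i)) = a σ := by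
  simp [coeff_sum, coeff_C_mul, coeff_prod_X_graph, DFunLike.coe_fn_eq]

lemma sum_C_mul_prod_X_perm_injective :
    Function.Injective fun a : Equiv.Perm α → R =>
      ∑ ρ : Equiv.Perm α, C (a ρ) * ∏ i, X (i, ρ i) := by
  intro a b hab
  funext σ
  rw [← coeff_sum_C_mul_prod_X_perm a σ, ← coeff_sum_C_mul_prod_X_perm b σ]
  exact congrArg _ hab

lemma sum_C_mul_prod_X_perm_comp (a : Equiv.Perm α → R) (τ₁ τ₂ : Equiv.Perm α) :
    ∑ σ : Equiv.Perm α, C (a σ) * ∏ i, X (R := R) (τ₁ i, τ₂ (σ i)) =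
      ∑ ρ : Equiv.Perm α, C (a (τ₂⁻¹ * ρ * τ₁)) * ∏ i, X (i, ρ i) := by
  refine Fintype.sum_equiv ((Equiv.mulLeft τ₂).trans (Equiv.mulRight τ₁⁻¹)) _ _ fun σ => ?_
  have hprod : ∏ i, X (R := R) (τ₁ i, τ₂ (σ i)) = ∏ i, X (i, τ₂ (σ (τ₁⁻¹ i))) := by
    rw [← Equiv.prod_comp τ₁ fun i => X (i, τ₂ (σ (τ₁⁻¹ i)))]
    simp
  simp [hprod, mul_assoc]

end Perm

/-- Suppose `(τ₁, τ₂, (c_σ))` acts on monomials by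
`∏ i x_{i σ(i)} ↦ c_σ ∏ i x_{τ₁(i) τ₂(σ(i))}`.  If this action fixes the immanant `P_π`
(`χ` being the class-function character associated to `π`), then
`c_{τ₂⁻¹τ₁σ} χ_π(τ₂⁻¹τ₁σ) = χ_π(σ)` for all `σ ∈ S_n`. -/
theorem stabilizing_action_coefficient_equation (n : ℕ) (χ : Equiv.Perm (Fin n) → ℂ)
    (hχ : ∀ g h : Equiv.Perm (Fin n), χ (g * h * g⁻¹) = χ h)
    (τ₁ τ₂ : Equiv.Perm (Fin n)) (c : Equiv.Perm (Fin n) → ℂ)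
    (hfix : ∑ σ : Equiv.Perm (Fin n),
          MvPolynomial.C (χ σ * c σ) *
            ∏ i, MvPolynomial.X (R := ℂ) ((τ₁ i, τ₂ (σ i)) : Fin n × Fin n)
        = ∑ σ : Equiv.Perm (Fin n),
            MvPolynomial.C (χ σ) * ∏ i, MvPolynomial.X ((i, σ i) : Fin n × Fin n)) :
    ∀ σ : Equiv.Perm (Fin n),
      c (τ₂⁻¹ * τ₁ * σ) * χ (τ₂⁻¹ * τ₁ * σ) = χ σ := by
  intro σ
  rw [sum_C_mul_prod_X_perm_comp (fun σ => χ σ * c σ)] at hfix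
  have hcoeff := congrFun (sum_C_mul_prod_X_perm_injective hfix) (τ₁ * σ * τ₁⁻¹)
  have hconj : τ₂⁻¹ * (τ₁ * σ * τ₁⁻¹) * τ₁ = τ₂⁻¹ * τ₁ * σ := by group
  rw [hconj, hχ] at hcoeff
  rw [mul_comm, hcoeff]
end
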